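/- arXiv:1506.03528 — 4 statements merged into one kernel-verified Lean document; each statement's English description precedes it below -/
import Mathlib

section
/- The truncation of a nonempty AVL tree, obtained by deleting all leaves and decreasing the rank of each remaining node by 1, is an AVL tree. -/
inductive RTree : Type
  | nil : RTree
  | node : RTree → ℤ → RTree → RTree
  deriving DecidableEq

namespace RTree

/-- The rank of a ranked binary tree: missing nodes have rank -1. -/
def rank : RTree → ℤ
  | nil => -1
  | node _ k _ => k

/-- Number of nodes. -/
def size : RTree → ℕ
  | nil => 0
  | node l _ r => size l + size r + 1

/-- Height: a missing node has height -1, a leaf height 0. -/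
def height : RTree → ℤ
  | nil => -1
  | node l _ r => max (height l) (height r) + 1

/-- An AVL tree: a ranked binary tree in which every node is a 1,1-node or a
1,2-node (missing children have rank -1), with non-negative ranks. -/
def IsAVL : RTree → Prop
  | nil => True
  | node l k r =>
      IsAVL l ∧ IsAVL r ∧ 0 ≤ k ∧
      ((k - rank l = 1 ∧ k - rank r = 1) ∨
       (k - rank l = 1 ∧ k - rank r = 2) ∨
       (k - rank l = 2 ∧ k - rank r = 1))

/-- The truncation of a tree: delete all leaves and decrease the rank of
each remaining node by 1. -/
def truncate : RTree → RTree
  | nil => nil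
  | node nil _ nil => nil
  | node l k r => node (truncate l) (k - 1) (truncate r)

lemma rank_nonneg (t : RTree) (h : IsAVL t) (hne : t ≠ nil) : 0 ≤ rank t := by
  cases t with
  | nil => exact absurd rfl hne
  | node l k r => exact h.2.2.1

lemma truncate_node (l r : RTree) (k : ℤ) (h : l ≠ nil ∨ r ≠ nil) :
    truncate (node l k r) = node (truncate l) (k - 1) (truncate r) := by
  cases l <;> cases r <;> simp_all [truncate]

lemma truncate_nil : truncate nil = nil := rfl

lemma rank_nil : rank nil = -1 := rfl

lemma rank_node (l r : RTree) (k : ℤ) : rank (node l k r) = k := rfl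

lemma isAVL_truncate_aux (t : RTree) (hT : IsAVL t) (hne : t ≠ nil) :
    IsAVL (truncate t) ∧ rank (truncate t) = rank t - 1 := by
  induction t with
  | nil => exact absurd rfl hne
  | node l k r ihl ihr =>
    obtain ⟨hl, hr, hk, hbal⟩ := hT
    by_cases hln : l = nil
    · by_cases hrn : r = nil
      · subst hln; subst hrn
        rw [rank_nil] at hbal
        exact ⟨trivial, by rw [show truncate (node nil k nil) = nil from rfl,
          rank_nil, rank_node]; omega⟩
      · rw [truncate_node _ _ _ (Or.inr hrn)]
        obtain ⟨hr', hrr⟩ := ihr hr hrn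
        have hrge := rank_nonneg r hr hrn
        subst hln
        rw [truncate_nil]
        rw [rank_nil] at hbal
        refine ⟨?_, rank_node _ _ _⟩
        exact ⟨trivial, hr', by omega, by rw [rank_nil, hrr]; omega⟩
    · by_cases hrn : r = nil
      · rw [truncate_node _ _ _ (Or.inl hln)]
        obtain ⟨hl', hll⟩ := ihl hl hln
        have hlge := rank_nonneg l hl hln
        subst hrn
        rw [truncate_nil]
        rw [show rank nil = -1 from rfl] at hbal
        refine ⟨?_, rank_node _ _ _⟩
        exact ⟨hl', trivial, by omega, by rw [rank_nil, hll]; omega⟩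
      · rw [truncate_node _ _ _ (Or.inl hln)]
        obtain ⟨hl', hll⟩ := ihl hl hln
        obtain ⟨hr', hrr⟩ := ihr hr hrn
        have hlge := rank_nonneg l hl hln
        have hrge := rank_nonneg r hr hrn
        refine ⟨?_, rank_node _ _ _⟩
        exact ⟨hl', hr', by omega, by rw [hll, hrr]; omega⟩

/-- The truncation of a nonempty AVL tree is an AVL tree. -/
theorem isAVL_truncate (t : RTree) (hT : IsAVL t) (hne : t ≠ nil) :
    IsAVL (truncate t) := (isAVL_truncate_aux t hT hne).1

end RTree
end

section
/- Every tree in the set E of expensive AVL trees has even rank, and every tree in E is an AVL tree. -/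
namespace RTree

/-- The set `E` of expensive AVL trees: the smallest set containing the
one-node tree of rank 0 and closed under forming type-L and type-R trees of
rank `k + 2` from AVL trees `A`, `B`, `C` of equal rank `k` with
`A, C ∈ E`. -/
inductive InE : RTree → Prop
  | base : InE (node nil 0 nil)
  | typeL (A B C : RTree) (k : ℤ) :
      IsAVL A → IsAVL B → IsAVL C →
      rank A = k → rank B = k → rank C = k →
      InE A → InE C →
      InE (node (node A (k + 1) B) (k + 2) C)
  | typeR (A B C : RTree) (k : ℤ) :
      IsAVL A → IsAVL B → IsAVL C →
      rank A = k → rank B = k → rank C = k →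
      InE A → InE C →
      InE (node A (k + 2) (node B (k + 1) C))

theorem inE_rank_nonneg (t : RTree) (ht : InE t) : 0 ≤ rank t := by
  induction ht with
  | base => simp [rank]
  | typeL A B C k _ _ _ rA _ _ _ _ ihA _ => simp [rank]; omega
  | typeR A B C k _ _ _ rA _ _ _ _ ihA _ => simp [rank]; omega

/-- Every tree in `E` is an AVL tree of even rank. -/
theorem inE_isAVL_even_rank (t : RTree) (ht : InE t) :
    IsAVL t ∧ Even (rank t) := by
  induction ht with
  | base => exact ⟨⟨trivial, trivial, le_refl 0, Or.inl ⟨by simp [rank], by simp [rank]⟩⟩, ⟨0, rfl⟩⟩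
  | typeL A B C k hA hB hC rA rB rC hEA _ ihA ihC =>
    have hk : 0 ≤ k := rA ▸ inE_rank_nonneg A hEA
    obtain ⟨m, hm⟩ := ihA.2
    rw [rA] at hm
    refine ⟨⟨⟨hA, hB, by omega, Or.inl ⟨by rw [rA]; omega, by rw [rB]; omega⟩⟩, hC, by omega,
      ?_⟩, ⟨m + 1, by simp only [rank]; omega⟩⟩
    rw [rC]; simp only [rank]; omega
  | typeR A B C k hA hB hC rA rB rC hEA _ ihA ihC =>
    have hk : 0 ≤ k := rA ▸ inE_rank_nonneg A hEA
    obtain ⟨m, hm⟩ := ihA.2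
    rw [rA] at hm
    refine ⟨⟨hA, ⟨hB, hC, by omega, Or.inl ⟨by rw [rB]; omega, by rw [rC]; omega⟩⟩, by omega,
      ?_⟩, ⟨m + 1, by simp only [rank]; omega⟩⟩
    rw [rA]; simp only [rank]; omega

end RTree
end

section
/- Every tree T in the set E of expensive AVL trees has a unique shallow leaf: a leaf z such that every node on the path from z to the root, except the root itself, is a 2-child (has rank difference 2 with respect to its parent). -/
namespace RTree

/-- The subtree of `t` at the position given by a list of directions
(`false` = left, `true` = right); `none` if the position does not exist. -/
def subtreeAt : RTree → List Bool → Option RTree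
  | t, [] => some t
  | nil, _ :: _ => none
  | node l _ r, b :: p => subtreeAt (if b then r else l) p

/-- `p` is a path from the root of `t` to a leaf `z` (the shallow leaf) such
that every node on the path from `z` to the root, except the root itself, is a
2-child (its rank is 2 less than its parent's rank). -/
def IsShallowLeafPath (t : RTree) (p : List Bool) : Prop :=
  (∃ k, subtreeAt t p = some (node nil k nil)) ∧
  ∀ i, 1 ≤ i → i ≤ p.length →
    ∀ c pa, subtreeAt t (p.take i) = some c →
      subtreeAt t (p.take (i - 1)) = some pa →
      rank c = rank pa - 2

lemma path_cons (l r : RTree) (k : ℤ) (b : Bool) (p : List Bool) :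
    IsShallowLeafPath (node l k r) (b :: p) ↔
      rank (if b then r else l) = k - 2 ∧ IsShallowLeafPath (if b then r else l) p := by
  constructor
  · rintro ⟨hleaf, h2⟩
    have h1 := h2 1 le_rfl (by simp) (if b then r else l) (node l k r)
      (by simp [subtreeAt]) rfl
    refine ⟨by simpa [rank] using h1, hleaf, ?_⟩
    intro i hi1 hi2 c pa hc hpa
    obtain ⟨j, rfl⟩ : ∃ j, i = j + 1 := ⟨i - 1, by omega⟩
    exact h2 (j + 2) (by omega) (by simp; omega) c pa
      (by simpa [subtreeAt] using hc) (by simpa [subtreeAt] using hpa)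
  · rintro ⟨hr, hleaf, h2⟩
    refine ⟨hleaf, ?_⟩
    intro i hi1 hi2 c pa hc hpa
    obtain ⟨j, rfl⟩ : ∃ j, i = j + 1 := ⟨i - 1, by omega⟩
    cases j with
    | zero =>
        simp [subtreeAt] at hc hpa
        subst hc; subst hpa
        simpa [rank] using hr
    | succ j =>
        exact h2 (j + 1) (by omega) (by simp at hi2; omega) c pa
          (by simpa [subtreeAt] using hc) (by simpa [subtreeAt] using hpa)

/-- Every tree in `E` has a unique shallow leaf. -/
theorem shallow_leaf_exists_unique (t : RTree) (ht : InE t) :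
    ∃! p : List Bool, IsShallowLeafPath t p := by
  induction ht with
  | base =>
      refine ⟨[], ⟨⟨0, rfl⟩, by intro i h1 h2 c pa _ _; simp at h2; omega⟩, ?_⟩
      intro p hp
      cases p with
      | nil => rfl
      | cons b q =>
          rw [path_cons] at hp
          obtain ⟨h, -⟩ := hp
          cases b <;> simp [rank] at h
  | typeL A B C k hA hB hC rA rB rC hEA hEC ihA ihC =>
      obtain ⟨q, hq, huniq⟩ := ihC
      refine ⟨true :: q, ?_, ?_⟩
      · show IsShallowLeafPath _ (true :: q)
        rw [path_cons]
        refine ⟨by simp [rC], by simpa using hq⟩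
      · intro p hp
        cases p with
        | nil =>
            obtain ⟨m, hm⟩ := hp.1
            simp [subtreeAt] at hm
        | cons b p' =>
            rw [path_cons] at hp
            cases b with
            | false =>
                obtain ⟨h, -⟩ := hp
                simp [rank] at h
            | true =>
                obtain ⟨-, h⟩ := hp
                simp at h
                rw [huniq p' h]
  | typeR A B C k hA hB hC rA rB rC hEA hEC ihA ihC =>
      obtain ⟨q, hq, huniq⟩ := ihA
      refine ⟨false :: q, ?_, ?_⟩
      · show IsShallowLeafPath _ (false :: q)
        rw [path_cons]
        refine ⟨by simp [rA], by simpa using hq⟩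
      · intro p hp
        cases p with
        | nil =>
            obtain ⟨m, hm⟩ := hp.1
            simp [subtreeAt] at hm
        | cons b p' =>
            rw [path_cons] at hp
            cases b with
            | true =>
                obtain ⟨h, -⟩ := hp
                simp [rank] at h
            | false =>
                obtain ⟨-, h⟩ := hp
                simp at h
                rw [huniq p' h]

end RTree
end

section
/- For a tree T ∈ E of rank k, the path from the shallow leaf to the root of T has exactly k/2 + 1 nodes, i.e., the shallow leaf of a rank-k tree in E has depth exactly k/2. -/
namespace RTree

lemma InE.rank_nonneg {t : RTree} (ht : InE t) : 0 ≤ rank t := by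
  induction ht with
  | base => simp [rank]
  | typeL A B C k _ _ _ rA _ _ _ _ ihA _ => simp only [rank] at *; omega
  | typeR A B C k _ _ _ rA _ _ _ _ ihA _ => simp only [rank] at *; omega

lemma shallow_tail {l r : RTree} {v : ℤ} {b : Bool} {p : List Bool}
    (hp : IsShallowLeafPath (node l v r) (b :: p)) :
    rank (if b then r else l) = v - 2 ∧ IsShallowLeafPath (if b then r else l) p := by
  have hstep : subtreeAt (node l v r) [b] = some (if b then r else l) := by
    simp [subtreeAt]
  constructor
  · have := hp.2 1 le_rfl (by simp) (if b then r else l) (node l v r)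
      (by simpa [List.take] using hstep) (by simp [subtreeAt])
    simpa [rank] using this
  · constructor
    · obtain ⟨m, hm⟩ := hp.1
      exact ⟨m, by simpa [subtreeAt] using hm⟩
    · intro i hi1 hi2 c pa hc hpa
      obtain ⟨j, rfl⟩ : ∃ j, i = j + 1 := ⟨i - 1, by omega⟩
      refine hp.2 (j + 2) (by omega) (by simp; omega) c pa ?_ ?_
      · have : (b :: p).take (j + 2) = b :: p.take (j + 1) := rfl
        rw [this]; simpa [subtreeAt] using hc
      · have : (b :: p).take (j + 2 - 1) = b :: p.take j := rfl
        rw [this]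
        simpa [subtreeAt, show j + 1 - 1 = j from rfl] using hpa

/-- The shallow leaf of a rank-`k` tree in `E` has depth exactly `k / 2`:
the path from the root to the shallow leaf has `k / 2` edges, i.e. it
contains `k / 2 + 1` nodes. -/
theorem shallow_leaf_depth (t : RTree) (k : ℕ) (p : List Bool)
    (ht : InE t) (hk : rank t = (k : ℤ)) (hke : Even k)
    (hp : IsShallowLeafPath t p) :
    p.length = k / 2 := by
  induction ht generalizing k p with
  | base =>
    simp only [rank] at hk
    have hk0 : k = 0 := by omega
    subst hk0
    obtain ⟨m, hm⟩ := hp.1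
    match p with
    | [] => rfl
    | [b] =>
      cases b <;> simp [subtreeAt] at hm
    | b :: b' :: p' =>
      cases b <;> simp only [subtreeAt, if_true, Bool.false_eq_true, if_false] at hm <;>
        cases b' <;> simp [subtreeAt] at hm
  | typeL A B C m hA hB hC rA rB rC iA iC ihA ihC =>
    simp only [rank] at hk
    have hm0 : 0 ≤ m := rA ▸ iA.rank_nonneg
    have hkm : Even k := hke
    have hk2 : k % 2 = 0 := Nat.even_iff.mp hke
    match p with
    | [] =>
      obtain ⟨m', hm'⟩ := hp.1
      simp [subtreeAt] at hm'
    | b :: p' =>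
      obtain ⟨hrk, htail⟩ := shallow_tail hp
      have hb : b = true := by
        cases b
        · simp only [Bool.false_eq_true, if_false, rank] at hrk; omega
        · rfl
      subst hb
      simp only [if_true] at hrk htail
      have hrc : rank C = ((k - 2 : ℕ) : ℤ) := by
        rw [rC]; omega
      have := ihC (k - 2) p' hrc (Nat.even_iff.mpr (by omega)) htail
      simp only [List.length_cons, this]
      omega
  | typeR A B C m hA hB hC rA rB rC iA iC ihA ihC =>
    simp only [rank] at hk
    have hm0 : 0 ≤ m := rA ▸ iA.rank_nonneg
    have hk2 : k % 2 = 0 := Nat.even_iff.mp hke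
    match p with
    | [] =>
      obtain ⟨m', hm'⟩ := hp.1
      simp [subtreeAt] at hm'
    | b :: p' =>
      obtain ⟨hrk, htail⟩ := shallow_tail hp
      have hb : b = false := by
        cases b
        · rfl
        · simp only [if_true, rank] at hrk; omega
      subst hb
      simp only [Bool.false_eq_true, if_false] at hrk htail
      have hra : rank A = ((k - 2 : ℕ) : ℤ) := by
        rw [rA]; omega
      have := ihA (k - 2) p' hra (Nat.even_iff.mpr (by omega)) htail
      simp only [List.length_cons, this]
      omega

end RTree
end
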